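/- arXiv:1808.09531 — 5 statements merged into one kernel-verified Lean document; each statement's English description precedes it below -/
import Mathlib

section
/- Let G' = (V',E') be a finite simple graph, r a positive integer, G = G(G',r) the gadget graph, X = A₁ ∪ A₂ ∪ B, and γ_r = (r²+r−1)/(2r²+2r−1). Then X is a γ_r-quasi-clique in G: the induced subgraph G[X] is connected and every vertex of X has degree at least ⌈γ_r·(|X|−1)⌉ = ⌈γ_r·(2r²+r−1)⌉ in G[X]. -/
open SimpleGraph Set

/-- Vertex type of the gadget graph: the original vertices `V`, plus
`A₁` and `A₂` (each of size `r²`) and `B` (of size `r`). -/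
abbrev GadgetV (V : Type*) (r : ℕ) : Type _ := V ⊕ (Fin (r ^ 2) ⊕ Fin (r ^ 2) ⊕ Fin r)

/-- Membership in `A₁`. -/
def isA1 {V : Type*} {r : ℕ} : GadgetV V r → Prop
  | Sum.inr (Sum.inl _) => True
  | _ => False

/-- Membership in `A₂`. -/
def isA2 {V : Type*} {r : ℕ} : GadgetV V r → Prop
  | Sum.inr (Sum.inr (Sum.inl _)) => True
  | _ => False

/-- Membership in `B`. -/
def isB {V : Type*} {r : ℕ} : GadgetV V r → Prop
  | Sum.inr (Sum.inr (Sum.inr _)) => True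
  | _ => False

/-- The gadget graph `G(G',r)`: all edges of `G'`, `A₁`, `A₂`, `B` are cliques,
all pairs between `A₁` and `A₂`, between `A₁` and `B`, and between `A₁` and `V'`.
(A vertex of `A₁` is adjacent to every other vertex.) -/
def gadget {V : Type*} (G' : SimpleGraph V) (r : ℕ) : SimpleGraph (GadgetV V r) :=
  SimpleGraph.fromRel fun a b =>
    isA1 a ∨ (∃ u v, a = Sum.inl u ∧ b = Sum.inl v ∧ G'.Adj u v) ∨
      (isA2 a ∧ isA2 b) ∨ (isB a ∧ isB b)

/-- The set `X = A₁ ∪ A₂ ∪ B`. -/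
def Xset (V : Type*) (r : ℕ) : Set (GadgetV V r) := {x | isA1 x ∨ isA2 x ∨ isB x}

/-- Degree of a vertex `v` in the subgraph of `G` induced on `Q`:
the number of neighbors of `v` lying in `Q`. -/
noncomputable def degIn {W : Type*} (G : SimpleGraph W) (Q : Set W) (v : W) : ℕ :=
  (Q ∩ G.neighborSet v).ncard

/-- `Q` is a `γ`-quasi-clique in `G`: the induced subgraph `G[Q]` is connected and
every vertex of `Q` has degree at least `⌈γ·(|Q|-1)⌉` in `G[Q]`. -/
def IsQuasiClique {W : Type*} (G : SimpleGraph W) (γ : ℚ) (Q : Set W) : Prop :=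
  (G.induce Q).Connected ∧ ∀ v ∈ Q, ⌈γ * ((Q.ncard : ℚ) - 1)⌉ ≤ (degIn G Q v : ℤ)

/-- `γ_r = (r²+r−1)/(2r²+2r−1)`. -/
def gammaR (r : ℕ) : ℚ := ((r : ℚ) ^ 2 + r - 1) / (2 * (r : ℚ) ^ 2 + 2 * r - 1)

/-! Each vertex of `X` lies in one of the cliques `A₁ ∪ B` (of size `r² + r`) or `A₁ ∪ A₂`
(of size `2r²`), so its degree in `G[X]` is at least `r² + r - 1`, while
`γ_r (2r² + r - 1) ≤ r² + r - 1` because `2r² + r - 1 ≤ 2r² + 2r - 1`. Any vertex of `A₁` is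
adjacent to all of `X`, which makes `G[X]` connected. -/

section QuasiClique

variable {W : Type*} {G : SimpleGraph W} {Q S : Set W}

theorem SimpleGraph.IsClique.ncard_le_degIn_add_one (hS : G.IsClique S) (hSQ : S ⊆ Q)
    (hQ : Q.Finite) {v : W} (hv : v ∈ S) : S.ncard ≤ degIn G Q v + 1 := by
  have hsub : S \ {v} ⊆ Q ∩ G.neighborSet v := fun x ⟨hxS, hxv⟩ =>
    ⟨hSQ hxS, hS hv hxS (Ne.symm hxv)⟩
  rw [← ncard_sdiff_singleton_add_one hv (hQ.subset hSQ)]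
  exact Nat.add_le_add_right (ncard_le_ncard hsub (hQ.subset inter_subset_left)) 1

theorem connected_induce_of_forall_adj {c : W} (hc : c ∈ Q)
    (hadj : ∀ x ∈ Q, x ≠ c → G.Adj c x) : (G.induce Q).Connected := by
  have : Nonempty Q := ⟨⟨c, hc⟩⟩
  refine (connected_iff_exists_forall_reachable _).2 ⟨⟨c, hc⟩, fun ⟨x, hx⟩ => ?_⟩
  by_cases hxc : x = c
  · subst hxc; rfl
  · exact (show (G.induce Q).Adj ⟨c, hc⟩ ⟨x, hx⟩ from hadj x hx hxc).reachable

end QuasiClique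

section Gadget

variable {V : Type*} {r : ℕ}

theorem Xset_eq_range_inr : Xset V r = range Sum.inr := by
  ext (_ | _ | _ | _) <;> simp [Xset, isA1, isA2, isB]

theorem ncard_Xset : (Xset V r).ncard = 2 * r ^ 2 + r := by
  rw [Xset_eq_range_inr, ncard_range_of_injective Sum.inr_injective]
  simp only [Nat.card_sum, Nat.card_fin]
  ring

theorem Xset_finite : (Xset V r).Finite := by
  rw [Xset_eq_range_inr]
  exact finite_range _

theorem gadget_adj_of_isA1 (G' : SimpleGraph V) {a b : GadgetV V r} (ha : isA1 a)
    (hab : a ≠ b) : (gadget G' r).Adj a b :=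
  (fromRel_adj _ a b).2 ⟨hab, Or.inl (Or.inl ha)⟩

theorem gadget_isClique_isA1_or_isA2 (G' : SimpleGraph V) :
    (gadget G' r).IsClique {x | isA1 x ∨ isA2 x} := by
  rintro a ha b hb hab
  refine (fromRel_adj _ a b).2 ⟨hab, ?_⟩
  rcases a with _ | _ | _ | _ <;> rcases b with _ | _ | _ | _ <;>
    simp_all [isA1, isA2]

theorem gadget_isClique_isA1_or_isB (G' : SimpleGraph V) :
    (gadget G' r).IsClique {x | isA1 x ∨ isB x} := by
  rintro a ha b hb hab
  refine (fromRel_adj _ a b).2 ⟨hab, ?_⟩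
  rcases a with _ | _ | _ | _ <;> rcases b with _ | _ | _ | _ <;>
    simp_all [isA1, isB]

theorem ncard_isA1_or_isA2 : {x : GadgetV V r | isA1 x ∨ isA2 x}.ncard = 2 * r ^ 2 := by
  have : {x : GadgetV V r | isA1 x ∨ isA2 x} =
      range (Sum.elim (fun i => Sum.inr (Sum.inl i)) (fun i => Sum.inr (Sum.inr (Sum.inl i))) :
        Fin (r ^ 2) ⊕ Fin (r ^ 2) → GadgetV V r) := by
    ext (_ | _ | _ | _) <;> simp [isA1, isA2]
  rw [this, ncard_range_of_injective (Function.Injective.sumElim (by intro _ _; simp)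
    (by intro _ _; simp) (by simp))]
  simp only [Nat.card_sum, Nat.card_fin]
  ring

theorem ncard_isA1_or_isB : {x : GadgetV V r | isA1 x ∨ isB x}.ncard = r ^ 2 + r := by
  have : {x : GadgetV V r | isA1 x ∨ isB x} =
      range (Sum.elim (fun i => Sum.inr (Sum.inl i)) (fun i => Sum.inr (Sum.inr (Sum.inr i))) :
        Fin (r ^ 2) ⊕ Fin r → GadgetV V r) := by
    ext (_ | _ | _ | _) <;> simp [isA1, isB]
  rw [this, ncard_range_of_injective (Function.Injective.sumElim (by intro _ _; simp)
    (by intro _ _; simp) (by simp))]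
  simp only [Nat.card_sum, Nat.card_fin]

theorem le_degIn_gadget_Xset (G' : SimpleGraph V) {v : GadgetV V r} (hv : v ∈ Xset V r) :
    r ^ 2 + r ≤ degIn (gadget G' r) (Xset V r) v + 1 := by
  rcases hv with hv | hv | hv
  · rw [← ncard_isA1_or_isB (V := V)]
    exact (gadget_isClique_isA1_or_isB G').ncard_le_degIn_add_one
      (fun x hx => hx.imp_right Or.inr) Xset_finite (Or.inl hv)
  · calc r ^ 2 + r ≤ 2 * r ^ 2 := by nlinarith [Nat.le_self_pow two_ne_zero r]
      _ = _ := (ncard_isA1_or_isA2 (V := V)).symm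
      _ ≤ _ := (gadget_isClique_isA1_or_isA2 G').ncard_le_degIn_add_one
        (fun x hx => hx.imp_right Or.inl) Xset_finite (Or.inr hv)
  · rw [← ncard_isA1_or_isB (V := V)]
    exact (gadget_isClique_isA1_or_isB G').ncard_le_degIn_add_one
      (fun x hx => hx.imp_right Or.inr) Xset_finite (Or.inr hv)

theorem connected_induce_gadget_Xset (G' : SimpleGraph V) (hr : 0 < r) :
    ((gadget G' r).induce (Xset V r)).Connected :=
  connected_induce_of_forall_adj (c := Sum.inr (Sum.inl ⟨0, pow_pos hr 2⟩)) (Or.inl trivial)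
    fun _ _ hx => gadget_adj_of_isA1 G' trivial (Ne.symm hx)

end Gadget

theorem gammaR_mul_le {r : ℕ} (hr : 0 < r) :
    gammaR r * (2 * (r : ℚ) ^ 2 + r - 1) ≤ (r : ℚ) ^ 2 + r - 1 := by
  have hr' : (1 : ℚ) ≤ r := by exact_mod_cast hr
  rw [gammaR, div_mul_eq_mul_div, div_le_iff₀ (by nlinarith)]
  nlinarith

theorem stmt_4_general {V : Type*} (G' : SimpleGraph V) (r : ℕ) (hr : 0 < r) :
    (Xset V r).ncard = 2 * r ^ 2 + r ∧
      IsQuasiClique (gadget G' r) (gammaR r) (Xset V r) := by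
  refine ⟨ncard_Xset, connected_induce_gadget_Xset G' hr, fun v hv => ?_⟩
  have hdeg := le_degIn_gadget_Xset G' hv
  qify at hdeg
  rw [ncard_Xset, Int.ceil_le]
  push_cast
  linarith [gammaR_mul_le hr]

/-- `X = A₁ ∪ A₂ ∪ B` (of size `2r²+r`) is a `γ_r`-quasi-clique in the gadget graph:
`G[X]` is connected and every vertex of `X` has degree at least
`⌈γ_r·(|X|−1)⌉ = ⌈γ_r·(2r²+r−1)⌉` in `G[X]`. -/
theorem stmt_4 {V : Type*} [Fintype V] (G' : SimpleGraph V) (r : ℕ) (hr : 0 < r) :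
    (Xset V r).ncard = 2 * r ^ 2 + r ∧
      IsQuasiClique (gadget G' r) (gammaR r) (Xset V r) :=
  stmt_4_general G' r hr
end

section
/- Let G' = (V',E') be a finite simple graph, r a positive integer, G = G(G',r) the gadget graph, X = A₁ ∪ A₂ ∪ B, and γ_r = (r²+r−1)/(2r²+2r−1). If L ⊆ V' is a clique of size r in G', then Q = X ∪ L is a γ_r-quasi-clique in G; here |Q| = 2r²+2r and ⌈γ_r·(|Q|−1)⌉ = r²+r−1, and every vertex of Q has degree at least r²+r−1 in G[Q]. -/
open SimpleGraph Set

/-!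
Every vertex of `A₁` is adjacent to all other vertices, so `G[Q]` is connected, and each vertex
`v ∈ Q` lies in a clique of `G[Q]` with at least `r² + r` vertices: `A₁ ∪ B` for `v ∈ A₁ ∪ B`,
`A₁ ∪ A₂` for `v ∈ A₂` and `A₁ ∪ L` for `v ∈ L`. Hence `v` has degree at least `r² + r - 1`
in `G[Q]`, and `γ_r · (|Q| - 1) = r² + r - 1` exactly since `|Q| = 2r² + 2r`.
-/

namespace SimpleGraph

variable {W : Type*} {G : SimpleGraph W}

theorem connected_induce_of_forall_adj {Q : Set W} {c : W} (hc : c ∈ Q)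
    (h : ∀ x ∈ Q, x ≠ c → G.Adj x c) : (G.induce Q).Connected := by
  have reach (x : Q) : (G.induce Q).Reachable x ⟨c, hc⟩ := by
    obtain ⟨x, hx⟩ := x
    by_cases hxc : x = c
    · subst hxc
      rfl
    · exact Adj.reachable (h x hx hxc)
  exact (connected_iff _).mpr ⟨fun x y => (reach x).trans (reach y).symm, ⟨⟨c, hc⟩⟩⟩

theorem isClique_union_of_forall_adj {s t : Set W} (hs : ∀ a ∈ s, ∀ b, a ≠ b → G.Adj a b)
    (ht : G.IsClique t) : G.IsClique (s ∪ t) := by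
  rintro a (ha | ha) b (hb | hb) hab
  · exact hs a ha b hab
  · exact hs a ha b hab
  · exact (hs b hb a hab.symm).symm
  · exact ht ha hb hab

theorem ncard_sub_one_le_degIn {Q K : Set W} (hQ : Q.Finite) (hKQ : K ⊆ Q) (hK : G.IsClique K)
    {v : W} (hv : v ∈ K) : K.ncard - 1 ≤ degIn G Q v := by
  rw [← ncard_sdiff_singleton_of_mem hv]
  refine ncard_le_ncard (fun x ⟨hxK, hxv⟩ => ⟨hKQ hxK, ?_⟩) (hQ.subset inter_subset_left)
  exact hK hv hxK (Ne.symm hxv)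

end SimpleGraph

namespace Gadget

variable {V : Type*} {r : ℕ}

def A₁ (V : Type*) (r : ℕ) : Set (GadgetV V r) := range fun i => .inr (.inl i)

def A₂ (V : Type*) (r : ℕ) : Set (GadgetV V r) := range fun i => .inr (.inr (.inl i))

def B (V : Type*) (r : ℕ) : Set (GadgetV V r) := range fun i => .inr (.inr (.inr i))

theorem ncard_A₁ : (A₁ V r).ncard = r ^ 2 := by
  rw [A₁, ncard_range_of_injective (fun _ _ h => by simpa using h), Nat.card_fin]

theorem ncard_A₂ : (A₂ V r).ncard = r ^ 2 := by
  rw [A₂, ncard_range_of_injective (fun _ _ h => by simpa using h), Nat.card_fin]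

theorem ncard_B : (B V r).ncard = r := by
  rw [B, ncard_range_of_injective (fun _ _ h => by simpa using h), Nat.card_fin]

theorem disjoint_A₁_A₂ : Disjoint (A₁ V r) (A₂ V r) := disjoint_range_iff.mpr (by simp)

theorem disjoint_A₁_B : Disjoint (A₁ V r) (B V r) := disjoint_range_iff.mpr (by simp)

theorem Xset_eq_range_inr : Xset V r = range Sum.inr := by
  ext x
  rcases x with u | i | j | k <;> simp [Xset, isA1, isA2, isB]

theorem ncard_Xset_union_image_inl [Finite V] (s : Finset V) :
    (Xset V r ∪ Sum.inl '' (s : Set V)).ncard = 2 * r ^ 2 + r + s.card := by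
  have hdisj : Disjoint (Xset V r) (Sum.inl '' (s : Set V)) := by
    rw [Xset_eq_range_inr]
    exact (isCompl_range_inl_range_inr.disjoint.mono_left (image_subset_range _ _)).symm
  rw [ncard_union_eq hdisj, Xset_eq_range_inr, ncard_range_of_injective Sum.inr_injective,
    ncard_image_of_injective _ Sum.inl_injective, ncard_coe_finset]
  simp only [Nat.card_sum, Nat.card_fin]
  ring

theorem A₁_subset_Xset : A₁ V r ⊆ Xset V r := by
  rintro _ ⟨i, rfl⟩
  exact Or.inl trivial

theorem A₂_subset_Xset : A₂ V r ⊆ Xset V r := by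
  rintro _ ⟨i, rfl⟩
  exact Or.inr (Or.inl trivial)

theorem B_subset_Xset : B V r ⊆ Xset V r := by
  rintro _ ⟨i, rfl⟩
  exact Or.inr (Or.inr trivial)

variable {G' : SimpleGraph V}

theorem adj_of_mem_A₁ {a b : GadgetV V r} (ha : a ∈ A₁ V r) (hab : a ≠ b) :
    (gadget G' r).Adj a b := by
  obtain ⟨i, rfl⟩ := ha
  exact (fromRel_adj _ _ _).mpr ⟨hab, Or.inl (Or.inl trivial)⟩

theorem isClique_A₂ : (gadget G' r).IsClique (A₂ V r) := by
  rintro _ ⟨i, rfl⟩ _ ⟨j, rfl⟩ hij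
  exact (fromRel_adj _ _ _).mpr ⟨hij, Or.inl (Or.inr (Or.inr (Or.inl ⟨trivial, trivial⟩)))⟩

theorem isClique_B : (gadget G' r).IsClique (B V r) := by
  rintro _ ⟨i, rfl⟩ _ ⟨j, rfl⟩ hij
  exact (fromRel_adj _ _ _).mpr ⟨hij, Or.inl (Or.inr (Or.inr (Or.inr ⟨trivial, trivial⟩)))⟩

theorem isClique_image_inl {s : Set V} (hs : G'.IsClique s) :
    (gadget G' r).IsClique (Sum.inl '' s) := by
  rintro _ ⟨u, hu, rfl⟩ _ ⟨w, hw, rfl⟩ huw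
  have huw' : u ≠ w := fun h => huw (h ▸ rfl)
  exact (fromRel_adj _ _ _).mpr ⟨huw, Or.inl (Or.inr (Or.inl ⟨u, w, rfl, rfl, hs hu hw huw'⟩))⟩

theorem isClique_A₁_union {K : Set (GadgetV V r)} (hK : (gadget G' r).IsClique K) :
    (gadget G' r).IsClique (A₁ V r ∪ K) :=
  isClique_union_of_forall_adj (fun _ ha _ => adj_of_mem_A₁ ha) hK

theorem exists_isClique_of_mem [Finite V] {L : Finset V} (hL : G'.IsNClique r L)
    {v : GadgetV V r} (hv : v ∈ Xset V r ∪ Sum.inl '' (L : Set V)) :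
    ∃ K ⊆ Xset V r ∪ Sum.inl '' (L : Set V),
      v ∈ K ∧ (gadget G' r).IsClique K ∧ r ^ 2 + r ≤ K.ncard := by
  have key {K : Set (GadgetV V r)} (hKX : K ⊆ Xset V r ∪ Sum.inl '' (L : Set V))
      (hK : (gadget G' r).IsClique K) (hdisj : Disjoint (A₁ V r) K) (hcard : r ≤ K.ncard)
      (hvK : v ∈ A₁ V r ∪ K) :
      ∃ K ⊆ Xset V r ∪ Sum.inl '' (L : Set V),
        v ∈ K ∧ (gadget G' r).IsClique K ∧ r ^ 2 + r ≤ K.ncard := by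
    refine ⟨A₁ V r ∪ K, union_subset (A₁_subset_Xset.trans subset_union_left) hKX, hvK,
      isClique_A₁_union hK, ?_⟩
    rw [ncard_union_eq hdisj, ncard_A₁]
    omega
  have hB := key (B_subset_Xset.trans subset_union_left) isClique_B disjoint_A₁_B ncard_B.ge
  rcases hv with hX | ⟨u, hu, rfl⟩
  · rcases v with u | i | j | k
    · simp [Xset, isA1, isA2, isB] at hX
    · exact hB (Or.inl ⟨i, rfl⟩)
    · refine key (A₂_subset_Xset.trans subset_union_left) isClique_A₂ disjoint_A₁_A₂ ?_
        (Or.inr ⟨j, rfl⟩)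
      rw [ncard_A₂]
      exact Nat.le_self_pow two_ne_zero r
    · exact hB (Or.inr ⟨k, rfl⟩)
  · refine key subset_union_right (isClique_image_inl hL.isClique) ?_ ?_ (Or.inr ⟨u, hu, rfl⟩)
    · exact disjoint_range_iff.mpr (by simp) |>.mono_right (image_subset_range _ _)
    · rw [ncard_image_of_injective _ Sum.inl_injective, ncard_coe_finset, hL.card_eq]

end Gadget

theorem gammaR_mul (r : ℕ) : gammaR r * (2 * (r : ℚ) ^ 2 + 2 * r - 1) = (r : ℚ) ^ 2 + r - 1 := by
  have hden : (2 * (r : ℚ) ^ 2 + 2 * r - 1) ≠ 0 := by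
    rcases r.eq_zero_or_pos with rfl | hr
    · norm_num
    · have : (1 : ℚ) ≤ r := by exact_mod_cast hr
      nlinarith
  exact div_mul_cancel₀ _ hden

theorem ceil_gammaR_mul (r : ℕ) :
    ⌈gammaR r * (2 * (r : ℚ) ^ 2 + 2 * r - 1)⌉ = (r : ℤ) ^ 2 + r - 1 := by
  rw [gammaR_mul, ← Int.ceil_intCast (R := ℚ) ((r : ℤ) ^ 2 + r - 1)]
  push_cast
  rfl

open Gadget in
/-- If `L ⊆ V'` is a clique of size `r` in `G'`, then `Q = X ∪ L` is a
`γ_r`-quasi-clique in the gadget graph; here `|Q| = 2r²+2r`,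
`⌈γ_r·(|Q|−1)⌉ = r²+r−1`, and every vertex of `Q` has degree at least
`r²+r−1` in `G[Q]`. -/
theorem stmt_5 {V : Type*} [Fintype V] (G' : SimpleGraph V) (r : ℕ) (hr : 0 < r)
    (L : Finset V) (hL : G'.IsNClique r L) :
    IsQuasiClique (gadget G' r) (gammaR r) (Xset V r ∪ Sum.inl '' (L : Set V)) ∧
      (Xset V r ∪ Sum.inl '' (L : Set V)).ncard = 2 * r ^ 2 + 2 * r ∧
      ⌈gammaR r * ((2 * (r : ℚ) ^ 2 + 2 * r) - 1)⌉ = (r : ℤ) ^ 2 + r - 1 ∧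
      ∀ v ∈ Xset V r ∪ Sum.inl '' (L : Set V),
        r ^ 2 + r - 1 ≤ degIn (gadget G' r) (Xset V r ∪ Sum.inl '' (L : Set V)) v := by
  set Q := Xset V r ∪ Sum.inl '' (L : Set V)
  have hQ : Q.ncard = 2 * r ^ 2 + 2 * r := by
    rw [ncard_Xset_union_image_inl, hL.card_eq]
    ring
  have hdeg (v : GadgetV V r) (hv : v ∈ Q) : r ^ 2 + r - 1 ≤ degIn (gadget G' r) Q v := by
    obtain ⟨K, hKQ, hvK, hK, hcard⟩ := exists_isClique_of_mem hL hv
    exact (Nat.sub_le_sub_right hcard 1).trans (ncard_sub_one_le_degIn (toFinite Q) hKQ hK hvK)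
  have hconn : (gadget G' r |>.induce Q).Connected :=
    connected_induce_of_forall_adj (c := .inr (.inl ⟨0, pow_pos hr 2⟩)) (Or.inl (Or.inl trivial))
      fun _ _ hx => (adj_of_mem_A₁ ⟨_, rfl⟩ (Ne.symm hx)).symm
  refine ⟨⟨hconn, fun v hv => ?_⟩, hQ, ceil_gammaR_mul r, hdeg⟩
  rw [hQ]
  push_cast
  rw [ceil_gammaR_mul]
  have h := hdeg v hv
  rw [← Nat.cast_le (α := ℤ), Nat.cast_sub (le_add_left hr)] at h
  push_cast at h
  exact h
end

section
/- Let G' = (V',E') be a finite simple graph, r a positive integer, G = G(G',r) the gadget graph, and X = A₁ ∪ A₂ ∪ B. For every subset M ⊆ V', every vertex v ∈ M has degree at most r² + |M| − 1 in the subgraph of G induced on X ∪ M; moreover, if M is not a clique in G', then some vertex v ∈ M has degree at most r² + |M| − 2 in this induced subgraph. -/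
open SimpleGraph Set

/-! A vertex `v ∈ M` of the gadget graph sees, inside `X ∪ M`, exactly the `r²` vertices of `A₁`
together with its `G'`-neighbours in `M`, so its degree there is `r² + |M ∩ N(v)|`. The set
`M ∩ N(v)` misses `v`, and also a second vertex of `M` when `v` has a non-neighbour in `M`. -/

section Gadget

variable {V : Type*} (G' : SimpleGraph V) (r : ℕ)

lemma gadget_adj_inl {v : V} {b : GadgetV V r} :
    (gadget G' r).Adj (Sum.inl v) b ↔ isA1 b ∨ ∃ u, b = Sum.inl u ∧ G'.Adj v u := by
  rcases b with u | _ | _ | _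
  · simpa [gadget, isA1, isA2, isB, G'.adj_comm u v] using G'.ne_of_adj
  all_goals simp [gadget, isA1, isA2, isB]

lemma gadget_inter_neighborSet_inl (M : Set V) (v : V) :
    (Xset V r ∪ Sum.inl '' M) ∩ (gadget G' r).neighborSet (Sum.inl v)
      = Set.range (Sum.inr ∘ Sum.inl) ∪ Sum.inl '' (M ∩ G'.neighborSet v) := by
  ext (_ | _ | _ | _) <;> simp [gadget_adj_inl, Xset, isA1, isA2, isB]

lemma degIn_gadget_inl {M : Set V} (hM : M.Finite) (v : V) :
    degIn (gadget G' r) (Xset V r ∪ Sum.inl '' M) (Sum.inl v)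
      = r ^ 2 + (M ∩ G'.neighborSet v).ncard := by
  rw [degIn, gadget_inter_neighborSet_inl, Set.ncard_union_eq (by simp [Set.disjoint_left])
    (Set.finite_range _) ((hM.inter_of_left _).image _), Set.ncard_range_of_injective
    (Sum.inr_injective.comp Sum.inl_injective), Set.ncard_image_of_injective _ Sum.inl_injective,
    Nat.card_eq_fintype_card, Fintype.card_fin]

end Gadget

namespace SimpleGraph
variable {W : Type*} (G : SimpleGraph W) {M : Set W} {v w : W}

lemma ncard_inter_neighborSet_lt (hM : M.Finite) (hv : v ∈ M) :
    (M ∩ G.neighborSet v).ncard < M.ncard :=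
  Set.ncard_lt_ncard ⟨Set.inter_subset_left, fun h => G.irrefl (h hv).2⟩ hM

lemma ncard_inter_neighborSet_add_two_le (hM : M.Finite) (hv : v ∈ M) (hw : w ∈ M)
    (hvw : v ≠ w) (hnadj : ¬ G.Adj v w) :
    (M ∩ G.neighborSet v).ncard + 2 ≤ M.ncard := by
  have hpair : {v, w} ⊆ M := Set.insert_subset hv (Set.singleton_subset_iff.2 hw)
  have hsub : M ∩ G.neighborSet v ⊆ M \ {v, w} := by
    rintro x ⟨hx, hadj⟩
    refine ⟨hx, ?_⟩
    rintro (rfl | rfl)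
    · exact G.irrefl hadj
    · exact hnadj hadj
  calc (M ∩ G.neighborSet v).ncard + 2
      ≤ (M \ {v, w}).ncard + ({v, w} : Set W).ncard := by
        rw [Set.ncard_pair hvw]
        exact Nat.add_le_add_right (Set.ncard_le_ncard hsub hM.sdiff) 2
    _ = M.ncard := Set.ncard_sdiff_add_ncard_of_subset hpair hM

end SimpleGraph

theorem stmt_9_general {V : Type*} [Fintype V] (G' : SimpleGraph V) (r : ℕ)
    (M : Set V) :
    (∀ v ∈ M,
        degIn (gadget G' r) (Xset V r ∪ Sum.inl '' M) (Sum.inl v) ≤ r ^ 2 + M.ncard - 1) ∧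
      (¬ G'.IsClique M → ∃ v ∈ M,
        degIn (gadget G' r) (Xset V r ∪ Sum.inl '' M) (Sum.inl v) ≤ r ^ 2 + M.ncard - 2) := by
  have hM := M.toFinite
  refine ⟨fun v hv => ?_, fun hnc => ?_⟩
  · have hlt := G'.ncard_inter_neighborSet_lt hM hv
    rw [degIn_gadget_inl G' r hM v]
    omega
  · obtain ⟨v, hv, w, hw, hvw, hnadj⟩ : ∃ v ∈ M, ∃ w ∈ M, v ≠ w ∧ ¬ G'.Adj v w := by
      simpa [SimpleGraph.IsClique, Set.Pairwise] using hnc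
    have hle := G'.ncard_inter_neighborSet_add_two_le hM hv hw hvw hnadj
    refine ⟨v, hv, ?_⟩
    rw [degIn_gadget_inl G' r hM v]
    omega

/-- For every subset `M ⊆ V'`, every vertex `v ∈ M` has degree at most
`r² + |M| − 1` in the subgraph of the gadget graph induced on `X ∪ M`; moreover,
if `M` is not a clique in `G'`, then some vertex of `M` has degree at most
`r² + |M| − 2` in this induced subgraph. -/
theorem stmt_9 {V : Type*} [Fintype V] (G' : SimpleGraph V) (r : ℕ) (hr : 0 < r)
    (M : Set V) :
    (∀ v ∈ M,
        degIn (gadget G' r) (Xset V r ∪ Sum.inl '' M) (Sum.inl v) ≤ r ^ 2 + M.ncard - 1) ∧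
      (¬ G'.IsClique M → ∃ v ∈ M,
        degIn (gadget G' r) (Xset V r ∪ Sum.inl '' M) (Sum.inl v) ≤ r ^ 2 + M.ncard - 2) :=
  stmt_9_general G' r M
end

section
/- Let G' = (V',E') be a finite simple graph, r a positive integer, G = G(G',r) the gadget graph, X = A₁ ∪ A₂ ∪ B, and γ_r = (r²+r−1)/(2r²+2r−1). If M ⊆ V' with |M| > r, then X ∪ M is not a γ_r-quasi-clique in G (the degree of any vertex of B in G[X ∪ M] is r²+r−1, which is strictly below the required threshold ⌈γ_r·(2r²+r+|M|−1)⌉). -/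
open SimpleGraph Set

/-- If `M ⊆ V'` with `|M| > r`, then `X ∪ M` is not a `γ_r`-quasi-clique in the
gadget graph. -/
theorem stmt_10 {V : Type*} [Fintype V] (G' : SimpleGraph V) (r : ℕ) (hr : 0 < r)
    (M : Set V) (hM : r < M.ncard) :
    ¬ IsQuasiClique (gadget G' r) (gammaR r) (Xset V r ∪ Sum.inl '' M) := by
  rintro ⟨-, hdeg⟩
  set Q : Set (GadgetV V r) := Xset V r ∪ Sum.inl '' M with hQ
  set b : GadgetV V r := Sum.inr (Sum.inr (Sum.inr ⟨0, hr⟩)) with hb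
  have hbQ : b ∈ Q := Or.inl (Or.inr (Or.inr trivial))
  have h := hdeg b hbQ
  -- compute |Q|
  have hX : Xset V r = Set.range (Sum.inr : (Fin (r^2) ⊕ Fin (r^2) ⊕ Fin r) → GadgetV V r) := by
    ext x
    rcases x with u | (i | (a | j)) <;> simp [Xset, isA1, isA2, isB]
  have hXcard : (Xset V r).ncard = 2 * r ^ 2 + r := by
    rw [hX, ← Set.image_univ, Set.ncard_image_of_injective _ Sum.inr_injective,
      Set.ncard_univ]
    simp [Nat.card_sum]
    ring
  have hdisj : Disjoint (Xset V r) (Sum.inl '' M) := by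
    rw [hX, Set.disjoint_left]
    rintro x ⟨y, rfl⟩ ⟨u, hu, h'⟩
    exact absurd h' (by simp)
  have hQcard : Q.ncard = 2 * r ^ 2 + r + M.ncard := by
    rw [hQ, Set.ncard_union_eq hdisj (Set.toFinite _) (Set.toFinite _), hXcard,
      Set.ncard_image_of_injective _ Sum.inl_injective]
  -- compute degree of b
  have hnb : Q ∩ (gadget G' r).neighborSet b =
      Set.range (fun i : Fin (r^2) => (Sum.inr (Sum.inl i) : GadgetV V r)) ∪
      (fun j : Fin r => (Sum.inr (Sum.inr (Sum.inr j)) : GadgetV V r)) '' {j | j ≠ ⟨0, hr⟩} := by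
    ext x
    rcases x with u | (i | (a | j))
    · simp [hQ, Xset, gadget, isA1, isA2, isB, hb, Fin.ext_iff, eq_comm]
    · simp [hQ, Xset, gadget, isA1, isA2, isB, hb, Fin.ext_iff, eq_comm]
    · simp [hQ, Xset, gadget, isA1, isA2, isB, hb, Fin.ext_iff, eq_comm]
    · simp only [hQ, Xset, gadget, isA1, isA2, isB, hb, Fin.ext_iff, Set.mem_inter_iff,
        Set.mem_union, SimpleGraph.mem_neighborSet, SimpleGraph.fromRel_adj,
        Set.mem_image, Set.mem_setOf_eq, Set.mem_range]
      constructor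
      · rintro ⟨-, hne, -⟩
        refine Or.inr ⟨j, ?_, rfl⟩
        intro he; exact hne (by simp [Fin.ext_iff, he])
      · rintro (⟨i, h'⟩ | ⟨x, hx, he⟩)
        · exact absurd h' (by simp)
        · obtain rfl : x = j := by simpa using he
          exact ⟨Or.inl (Or.inr (Or.inr trivial)),
            fun he' => hx (by simpa [Fin.ext_iff, eq_comm] using he'),
            Or.inl (Or.inr (Or.inr (Or.inr ⟨trivial, trivial⟩)))⟩
  have hdegb : degIn (gadget G' r) Q b = r ^ 2 + (r - 1) := by
    rw [degIn, hnb, Set.ncard_union_eq]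
    · congr 1
      · rw [← Set.image_univ, Set.ncard_image_of_injective _ (by
          intro a b' hab; simpa using hab)]
        simp [Set.ncard_univ]
      · rw [Set.ncard_image_of_injective _ (by intro a b' hab; simpa using hab)]
        have : ({j | j ≠ (⟨0, hr⟩ : Fin r)} : Set (Fin r)) = Set.univ \ {⟨0, hr⟩} := by
          ext j; simp
        rw [this, Set.ncard_diff (by simp), Set.ncard_univ, Set.ncard_singleton]
        simp
    · rw [Set.disjoint_left]
      rintro x ⟨i, rfl⟩ ⟨j, hj, h'⟩
      exact absurd h' (by simp)
  rw [hdegb, hQcard] at h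
  -- the arithmetic contradiction
  have hm : (r : ℚ) + 1 ≤ M.ncard := by exact_mod_cast hM
  have hr1 : (1 : ℚ) ≤ r := by exact_mod_cast hr
  have hlt : ((r ^ 2 + (r - 1) : ℕ) : ℤ) <
      ⌈gammaR r * (((2 * r ^ 2 + r + M.ncard : ℕ) : ℚ) - 1)⌉ := by
    rw [Int.lt_ceil]
    have h1 : (1 : ℕ) ≤ r := hr
    push_cast [Nat.cast_sub h1]
    rw [gammaR, div_mul_eq_mul_div, lt_div_iff₀ (by nlinarith)]
    have hp : (0:ℚ) < (r:ℚ)^2 + r - 1 := by nlinarith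
    have key := mul_lt_mul_of_pos_left
      (show (2*(r:ℚ)^2 + 2*r - 1) < 2*(r:ℚ)^2 + r + (M.ncard:ℚ) - 1 by linarith) hp
    nlinarith [key]
  exact absurd h (not_le.mpr hlt)
end

section
/- Let G' = (V',E') be a finite simple graph, r a positive integer, G = G(G',r) the gadget graph, X = A₁ ∪ A₂ ∪ B, and γ_r = (r²+r−1)/(2r²+2r−1). If M ⊆ V' with |M| = r and M is not a clique in G', then X ∪ M is not a γ_r-quasi-clique in G (some vertex of M has degree at most r²+r−2 in G[X ∪ M], which is strictly below the required threshold ⌈γ_r·(2r²+2r−1)⌉ = r²+r−1). -/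
open SimpleGraph Set

lemma xset_eq (V : Type*) (r : ℕ) : Xset V r = Set.range Sum.inr := by
  ext x
  cases x with
  | inl u => simp [Xset, isA1, isA2, isB]
  | inr y => rcases y with a | a | a <;> simp [Xset, isA1, isA2, isB]

/-- If `M ⊆ V'` with `|M| = r` and `M` is not a clique in `G'`, then `X ∪ M` is
not a `γ_r`-quasi-clique in the gadget graph. -/
theorem stmt_12 {V : Type*} [Fintype V] (G' : SimpleGraph V) (r : ℕ) (hr : 0 < r)
    (M : Set V) (hM : M.ncard = r) (hnc : ¬ G'.IsClique M) :
    ¬ IsQuasiClique (gadget G' r) (gammaR r) (Xset V r ∪ Sum.inl '' M) := by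
  rintro ⟨-, hdeg⟩
  rw [SimpleGraph.isClique_iff, Set.Pairwise] at hnc
  push_neg at hnc
  obtain ⟨u, hu, v, hv, huv, hadj⟩ := hnc
  have hr2 : 2 ≤ r := by
    have hsub : ({u, v} : Set V) ⊆ M := by
      intro x hx; rcases hx with rfl | rfl; exacts [hu, hv]
    have := Set.ncard_le_ncard hsub M.toFinite
    rwa [Set.ncard_pair huv, hM] at this
  set Q := Xset V r ∪ Sum.inl '' M with hQ
  have hQmem : (Sum.inl u : GadgetV V r) ∈ Q := Or.inr ⟨u, hu, rfl⟩
  have h := hdeg _ hQmem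
  have hdisj : Disjoint (Xset V r) (Sum.inl '' M : Set (GadgetV V r)) := by
    rw [Set.disjoint_left]
    rintro x hx ⟨w, hw, rfl⟩
    simp [Xset, isA1, isA2, isB] at hx
  have hX : (Xset V r).ncard = 2 * r ^ 2 + r := by
    rw [xset_eq, ← Nat.card_coe_set_eq,
      Nat.card_range_of_injective Sum.inr_injective]
    simp [Nat.card_sum]
    ring
  have hMcard : (Sum.inl '' M : Set (GadgetV V r)).ncard = r := by
    rw [Set.ncard_image_of_injective _ Sum.inl_injective, hM]
  have hQcard : Q.ncard = 2 * r ^ 2 + 2 * r := by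
    rw [hQ, Set.ncard_union_eq hdisj (Set.toFinite _) (Set.toFinite _), hX, hMcard]
    ring
  -- degree bound
  have hsub2 : Q ∩ (gadget G' r).neighborSet (Sum.inl u)
      ⊆ (Set.range fun i : Fin (r ^ 2) => (Sum.inr (Sum.inl i) : GadgetV V r))
        ∪ Sum.inl '' (M \ {u, v}) := by
    rintro w ⟨hwQ, hwN⟩
    rw [SimpleGraph.mem_neighborSet] at hwN
    match w with
    | Sum.inr (Sum.inl a) => exact Or.inl ⟨a, rfl⟩
    | Sum.inr (Sum.inr (Sum.inl a)) =>
        exfalso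
        simp [gadget, SimpleGraph.fromRel_adj, isA1, isA2, isB] at hwN
    | Sum.inr (Sum.inr (Sum.inr b)) =>
        exfalso
        simp [gadget, SimpleGraph.fromRel_adj, isA1, isA2, isB] at hwN
    | Sum.inl w' =>
        have hwM : w' ∈ M := by
          rcases hwQ with hx | ⟨z, hz, hzeq⟩
          · simp [Xset, isA1, isA2, isB] at hx
          · rwa [← Sum.inl_injective hzeq]
        have hadj' : G'.Adj u w' := by
          simp only [gadget, SimpleGraph.fromRel_adj, isA1, isA2, isB] at hwN
          obtain ⟨-, h1 | h2⟩ := hwN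
          · rcases h1 with h | ⟨a, b, ha, hb, hab⟩ | ⟨h, -⟩ | ⟨h, -⟩
            · exact absurd h not_false
            · cases Sum.inl_injective ha; cases Sum.inl_injective hb; exact hab
            · exact absurd h not_false
            · exact absurd h not_false
          · rcases h2 with h | ⟨a, b, ha, hb, hab⟩ | ⟨-, h⟩ | ⟨-, h⟩
            · exact absurd h not_false
            · cases Sum.inl_injective ha; cases Sum.inl_injective hb; exact hab.symm
            · exact absurd h not_false
            · exact absurd h not_false
        refine Or.inr ⟨w', ⟨hwM, ?_⟩, rfl⟩
        simp only [Set.mem_insert_iff, Set.mem_singleton_iff]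
        push_neg
        exact ⟨fun hh => G'.irrefl (hh ▸ hadj'), fun hh => hadj (hh ▸ hadj')⟩
  have hinj : Function.Injective
      (fun i : Fin (r ^ 2) => (Sum.inr (Sum.inl i) : GadgetV V r)) := by
    intro i j hij
    simpa using hij
  have hA1 : (Set.range fun i : Fin (r ^ 2) =>
      (Sum.inr (Sum.inl i) : GadgetV V r)).ncard = r ^ 2 := by
    rw [← Nat.card_coe_set_eq, Nat.card_range_of_injective hinj, Nat.card_eq_fintype_card,
      Fintype.card_fin]
  have hMd : (M \ {u, v}).ncard = r - 2 := by
    have hsub : ({u, v} : Set V) ⊆ M := by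
      intro x hx; rcases hx with rfl | rfl; exacts [hu, hv]
    rw [Set.ncard_diff hsub, Set.ncard_pair huv, hM]
  have hdeg2 : degIn (gadget G' r) Q (Sum.inl u) ≤ r ^ 2 + (r - 2) := by
    unfold degIn
    calc (Q ∩ (gadget G' r).neighborSet (Sum.inl u)).ncard
        ≤ _ := Set.ncard_le_ncard hsub2 (Set.toFinite _)
      _ ≤ _ := Set.ncard_union_le _ _
      _ = r ^ 2 + (r - 2) := by rw [hA1, Set.ncard_image_of_injective _ Sum.inl_injective, hMd]
  have hceil : ⌈gammaR r * ((Q.ncard : ℚ) - 1)⌉ = (r : ℤ) ^ 2 + r - 1 := by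
    rw [hQcard]
    have heq : gammaR r * (((2 * r ^ 2 + 2 * r : ℕ) : ℚ) - 1)
        = (((r : ℤ) ^ 2 + r - 1 : ℤ) : ℚ) := by
      have hr1 : (1 : ℚ) ≤ (r : ℚ) := by exact_mod_cast hr
      have hden : 2 * (r : ℚ) ^ 2 + 2 * r - 1 ≠ 0 := by nlinarith
      unfold gammaR
      rw [div_mul_eq_mul_div, div_eq_iff hden]
      push_cast
      ring
    rw [heq, Int.ceil_intCast]
  rw [hceil] at h
  have hle : ((degIn (gadget G' r) Q (Sum.inl u) : ℕ) : ℤ) ≤ (r : ℤ) ^ 2 + ((r : ℤ) - 2) := by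
    have := hdeg2
    have h2 : ((r - 2 : ℕ) : ℤ) = (r : ℤ) - 2 := by
      rw [Nat.cast_sub hr2]; norm_num
    calc ((degIn (gadget G' r) Q (Sum.inl u) : ℕ) : ℤ)
        ≤ ((r ^ 2 + (r - 2) : ℕ) : ℤ) := by exact_mod_cast this
      _ = (r : ℤ) ^ 2 + ((r : ℤ) - 2) := by push_cast [Nat.cast_sub hr2]; ring
  linarith
end
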